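/- Under the standing hypotheses, assume in addition 0 < η < e^{σ}, 1 + ηe^{−σ} < e^{−σ/2}, and σ + u > 0. Let r > 0 and δ* ∈ (0,1) satisfy 1 + (2/σ)·log r < (1/(u + log 2))·log(1/δ*) − 1, and assume ∂₁G(0,y) ∉ L for every y ∈ e₃ + L with |y − e₃| < r. For x ∈ ℝ³ with |P_L x| = 1 and 0 < x₃ < δ*, let τ(x) denote the unique t > 0 with 0 < G₃(s,x) < 1 for s ∈ [0,t) and G₃(t,x) = 1. Then the travel-time map is continuously differentiable: the function (ψ, δ) ↦ τ((cos ψ, sin ψ, δ)) is C¹ on ℝ × (0, δ*). -/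

import Mathlib

/-
The travel time is, locally, the first time at which the C¹ function
`(ψ, δ, t) ↦ G₃(t, (cos ψ, sin ψ, δ))` reaches the level `1`. By the implicit function theorem,
such a first hitting time is C¹ wherever the crossing is transversal, and transversality is the
hypothesis on `∂₁G` near `e₃`; so it suffices that the exit point lies within `r` of `e₃`.
Over unit time the mean value inequality, together with the invariance of `L` and `U`, shows that
`|P_L|` contracts by the factor `e^σ + η < e^{σ/2}` while `|P_U|` grows at most by
`e^u + η ≤ 2e^u`. Starting at height `δ < δ*`, the orbit therefore needs more than
`log(1/δ*)/(u + log 2) - 1` units of time to reach height `1`, and by then `|P_L| < r`.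
-/

noncomputable section
open Real Set

abbrev R3 := EuclideanSpace ℝ (Fin 3)

/-- Orthogonal projection onto `L = ℝe₁ ⊕ ℝe₂`. -/
def PL (x : R3) : R3 := WithLp.toLp 2 (fun i => if (i : ℕ) = 2 then 0 else x i)

/-- Orthogonal projection onto `U = ℝe₃`. -/
def PU (x : R3) : R3 := WithLp.toLp 2 (fun i => if (i : ℕ) = 2 then x i else 0)

/-- The plane `L = ℝe₁ ⊕ ℝe₂`. -/
def Lset : Set R3 := {x | x 2 = 0}

/-- The line `U = ℝe₃`. -/
def Uset : Set R3 := {x | x 0 = 0 ∧ x 1 = 0}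

/-- `B₁ = {x : |P_L x| ≤ 1, |P_U x| ≤ 1}`. -/
def B1 : Set R3 := {x | ‖PL x‖ ≤ 1 ∧ ‖PU x‖ ≤ 1}

/-- The linearized flow `T(t)`. -/
def Tmap (σ μ u t : ℝ) (x : R3) : R3 := WithLp.toLp 2 (fun i =>
  if (i : ℕ) = 0 then exp (σ * t) * (cos (μ * t) * x 0 + sin (μ * t) * x 1)
  else if (i : ℕ) = 1 then exp (σ * t) * (-(sin (μ * t)) * x 0 + cos (μ * t) * x 1)
  else exp (u * t) * x 2)

/-- A C¹ flow on ℝ³. -/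
def IsC1Flow (G : ℝ → R3 → R3) : Prop :=
  ContDiff ℝ 1 (fun p : ℝ × R3 => G p.1 p.2) ∧ (∀ x, G 0 x = x) ∧
    ∀ s t x, G (t + s) x = G t (G s x)

/-- `M` is invariant under the flow `G` in the set `N`. -/
def InvariantIn (G : ℝ → R3 → R3) (M N : Set R3) : Prop :=
  ∀ x ∈ M ∩ N, ∀ I : Set ℝ, (0 : ℝ) ∈ I → I.OrdConnected →
    (∀ t ∈ I, G t x ∈ N) → ∀ t ∈ I, G t x ∈ M

/-- The third basis vector `e₃`. -/
def e3 : R3 := WithLp.toLp 2 (fun i => if (i : ℕ) = 2 then 1 else 0)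

/-- The point `(cos ψ, sin ψ, δ)` on the cylinder. -/
def xpt (ψ δ : ℝ) : R3 := WithLp.toLp 2 (fun i =>
  if (i : ℕ) = 0 then cos ψ else if (i : ℕ) = 1 then sin ψ else δ)

open Filter Topology

section HittingTime

def IsFirstHitTime (f : ℝ → ℝ) (c t : ℝ) : Prop :=
  0 < t ∧ (∀ s ∈ Ico 0 t, f s < c) ∧ f t = c

variable {f : ℝ → ℝ} {c t d : ℝ}

lemma IsFirstHitTime.nonneg_of_hasDerivAt (h : IsFirstHitTime f c t) (hd : HasDerivAt f d t) :
    0 ≤ d := by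
  refine ge_of_tendsto (hd.tendsto_slope.mono_left (nhdsLT_le_nhdsNE t)) ?_
  filter_upwards [Ioo_mem_nhdsLT h.1] with s hs
  rw [slope_def_field, h.2.2]
  exact div_nonneg_of_nonpos (by linarith [h.2.1 s ⟨hs.1.le, hs.2⟩]) (by linarith [hs.2])

lemma HasDerivAt.eventually_gt_of_pos (hd : HasDerivAt f d t) (hpos : 0 < d) :
    ∀ᶠ s in 𝓝[>] t, f t < f s := by
  filter_upwards [(hd.tendsto_slope.mono_left (nhdsGT_le_nhdsNE t)).eventually (lt_mem_nhds hpos),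
    self_mem_nhdsWithin] with s hslope hs
  rw [slope_def_field] at hslope
  exact sub_pos.1 ((div_pos_iff_of_pos_right (sub_pos.2 hs)).1 hslope)

variable {E : Type*} {F : E × ℝ → ℝ} {τ : E → ℝ} {p₀ : E}

lemma continuousAt_of_isFirstHitTime [TopologicalSpace E] (hF : Continuous F)
    (hτ : ∀ᶠ p in 𝓝 p₀, IsFirstHitTime (fun s => F (p, s)) c (τ p))
    (hright : ∀ᶠ s in 𝓝[>] τ p₀, c < F (p₀, s)) : ContinuousAt τ p₀ := by
  have hτ₀ := hτ.self_of_nhds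
  refine tendsto_order.2 ⟨fun a ha => ?_, fun b hb => ?_⟩
  · have hbelow : ∀ᶠ p in 𝓝 p₀, ∀ s ∈ Icc 0 a, F (p, s) < c :=
      isCompact_Icc.eventually_forall_of_forall_eventually fun s hs =>
        (isOpen_lt hF continuous_const).mem_nhds (hτ₀.2.1 s ⟨hs.1, hs.2.trans_lt ha⟩)
    filter_upwards [hτ, hbelow] with p hp hpa
    by_contra! hle
    exact (hpa _ ⟨hp.1.le, hle⟩).ne hp.2.2
  · obtain ⟨s, hcs, hs⟩ := (hright.and (Ioo_mem_nhdsGT hb)).exists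
    filter_upwards [hτ, (isOpen_lt continuous_const (hF.comp (Continuous.prodMk_left s))).mem_nhds
      hcs] with p hp hps
    by_contra! hle
    exact (hp.2.1 s ⟨hτ₀.1.le.trans hs.1.le, hs.2.trans_le hle⟩).not_gt hps

lemma contDiffAt_of_isFirstHitTime [NormedAddCommGroup E] [NormedSpace ℝ E] [CompleteSpace E]
    (hF : ContDiff ℝ 1 F) (hτ : ∀ᶠ p in 𝓝 p₀, IsFirstHitTime (fun s => F (p, s)) c (τ p))
    (hd : HasDerivAt (fun s => F (p₀, s)) d (τ p₀)) (hd0 : d ≠ 0) : ContDiffAt ℝ 1 τ p₀ := by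
  have hτ₀ := hτ.self_of_nhds
  -- Crossing from below forces `d > 0`, hence `τ` is continuous; then `(p, τ p)` stays in the
  -- neighbourhood where the level set of `F` is the graph of the implicit function.
  have hpos : 0 < d := (hτ₀.nonneg_of_hasDerivAt hd).lt_of_ne' hd0
  have hcont : ContinuousAt τ p₀ :=
    continuousAt_of_isFirstHitTime hF.continuous hτ (hτ₀.2.2 ▸ hd.eventually_gt_of_pos hpos)
  set u : E × ℝ := (p₀, τ p₀)
  have hFu : fderiv ℝ F u ∘L .inr ℝ E ℝ =
      (ContinuousLinearEquiv.unitsEquivAut ℝ (Units.mk0 d hd0) : ℝ →L[ℝ] ℝ) := by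
    ext
    have := (hF.differentiable one_ne_zero u).hasFDerivAt.comp_hasDerivAt (τ p₀)
      ((hasDerivAt_const (τ p₀) p₀).prodMk (hasDerivAt_id (τ p₀)))
    simpa using this.unique hd
  have hinv : (fderiv ℝ F u ∘L .inr ℝ E ℝ).IsInvertible :=
    hFu ▸ ContinuousLinearMap.isInvertible_equiv
  refine (hF.contDiffAt.contDiffAt_implicitFunction one_ne_zero hinv).congr_of_eventuallyEq ?_
  filter_upwards [hτ, (tendsto_id.prodMk_nhds hcont).eventually
    (hF.contDiffAt.eventually_apply_eq_iff_implicitFunction one_ne_zero hinv)] with p hp hiff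
  exact (hiff.1 (hp.2.2.trans hτ₀.2.2.symm)).symm

end HittingTime

section Projections

lemma norm_eq_sqrt_coords (x : R3) : ‖x‖ = √(x 0 ^ 2 + x 1 ^ 2 + x 2 ^ 2) := by
  simp [EuclideanSpace.norm_eq, Fin.sum_univ_three]

lemma norm_PL (x : R3) : ‖PL x‖ = √(x 0 ^ 2 + x 1 ^ 2) := by
  simp [norm_eq_sqrt_coords, PL]

lemma norm_PU (x : R3) : ‖PU x‖ = |x 2| := by
  simp [norm_eq_sqrt_coords, PU, Real.sqrt_sq_eq_abs]

lemma norm_PL_le (x : R3) : ‖PL x‖ ≤ ‖x‖ := by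
  rw [norm_PL, norm_eq_sqrt_coords]
  exact Real.sqrt_le_sqrt (by nlinarith [sq_nonneg (x 2)])

lemma norm_PU_le (x : R3) : ‖PU x‖ ≤ ‖x‖ := by
  rw [norm_PU, norm_eq_sqrt_coords, ← Real.sqrt_sq_eq_abs]
  exact Real.sqrt_le_sqrt (by nlinarith [sq_nonneg (x 0), sq_nonneg (x 1)])

lemma PL_add_PU (x : R3) : PL x + PU x = x := by
  ext i; fin_cases i <;> simp [PL, PU]

@[simp] lemma PL_PL (x : R3) : PL (PL x) = PL x := by
  ext i; fin_cases i <;> simp [PL]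

@[simp] lemma PU_PU (x : R3) : PU (PU x) = PU x := by
  ext i; fin_cases i <;> simp [PU]

def projL : R3 →L[ℝ] R3 := LinearMap.toContinuousLinearMap
  { toFun := PL
    map_add' x y := by ext i; fin_cases i <;> simp [PL]
    map_smul' c x := by ext i; fin_cases i <;> simp [PL] }

def projU : R3 →L[ℝ] R3 := LinearMap.toContinuousLinearMap
  { toFun := PU
    map_add' x y := by ext i; fin_cases i <;> simp [PU]
    map_smul' c x := by ext i; fin_cases i <;> simp [PU] }

@[simp] lemma projL_apply (x : R3) : projL x = PL x := rfl

@[simp] lemma projU_apply (x : R3) : projU x = PU x := rfl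

lemma PL_eq_zero_of_mem_Uset {x : R3} (hx : x ∈ Uset) : PL x = 0 := by
  ext i; fin_cases i <;> simp [PL, hx.1, hx.2]

lemma PU_eq_zero_of_mem_Lset {x : R3} (hx : x ∈ Lset) : PU x = 0 := by
  ext i; fin_cases i <;> simp [PU, show x 2 = 0 from hx]

lemma PU_mem_Uset (x : R3) : PU x ∈ Uset := by simp [Uset, PU]

lemma PL_mem_Lset (x : R3) : PL x ∈ Lset := by simp [Lset, PL]

lemma PU_add_smul_PL_mem_B1 {x : R3} (hx : x ∈ B1) {s : ℝ} (hs : s ∈ Icc (0:ℝ) 1) :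
    PU x + s • PL x ∈ B1 := by
  have hPL : PL (PU x + s • PL x) = s • PL x := by
    ext i; fin_cases i <;> simp [PL, PU]
  have hPU : PU (PU x + s • PL x) = PU x := by
    ext i; fin_cases i <;> simp [PL, PU]
  refine ⟨?_, by rw [hPU]; exact hx.2⟩
  rw [hPL, norm_smul, Real.norm_of_nonneg hs.1]
  exact mul_le_one₀ hs.2 (norm_nonneg _) hx.1

lemma PL_add_smul_PU_mem_B1 {x : R3} (hx : x ∈ B1) {s : ℝ} (hs : s ∈ Icc (0:ℝ) 1) :
    PL x + s • PU x ∈ B1 := by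
  have hPL : PL (PL x + s • PU x) = PL x := by
    ext i; fin_cases i <;> simp [PL, PU]
  have hPU : PU (PL x + s • PU x) = s • PU x := by
    ext i; fin_cases i <;> simp [PL, PU]
  refine ⟨by rw [hPL]; exact hx.1, ?_⟩
  rw [hPU, norm_smul, Real.norm_of_nonneg hs.1]
  exact mul_le_one₀ hs.2 (norm_nonneg _) hx.2

lemma norm_PL_Tmap (σ μ u t : ℝ) (x : R3) :
    ‖PL (Tmap σ μ u t x)‖ = exp (σ * t) * ‖PL x‖ := by
  rw [norm_PL, norm_PL, ← Real.sqrt_sq (exp_pos (σ * t)).le, ← Real.sqrt_mul (sq_nonneg _)]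
  congr 1
  simp only [Tmap, PiLp.toLp_apply, Fin.isValue, Fin.coe_ofNat_eq_mod, Nat.zero_mod, ↓reduceIte,
    Nat.one_mod, one_ne_zero, neg_mul]
  linear_combination (exp (σ * t) ^ 2 * (x 0 ^ 2 + x 1 ^ 2)) * sin_sq_add_cos_sq (μ * t)

lemma norm_PU_Tmap (σ μ u t : ℝ) (x : R3) :
    ‖PU (Tmap σ μ u t x)‖ = exp (u * t) * ‖PU x‖ := by
  simp [norm_PU, Tmap, abs_mul]

lemma mem_Lset_sub_e3 {y : R3} (hy : y 2 = 1) : y - e3 ∈ Lset := by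
  simp [Lset, e3, hy]

lemma norm_sub_e3 {y : R3} (hy : y 2 = 1) : ‖y - e3‖ = ‖PL y‖ := by
  rw [norm_eq_sqrt_coords, norm_PL]
  simp [e3, hy]

lemma norm_PL_xpt (ψ δ : ℝ) : ‖PL (xpt ψ δ)‖ = 1 := by
  simp [norm_PL, xpt]

lemma contDiff_xpt {n : WithTop ℕ∞} : ContDiff ℝ n (fun p : ℝ × ℝ => xpt p.1 p.2) := by
  rw [contDiff_euclidean]
  intro i
  fin_cases i
  · exact contDiff_cos.comp contDiff_fst
  · exact contDiff_sin.comp contDiff_fst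
  · exact contDiff_snd

end Projections

section OneStep

lemma norm_apply_add_le_of_fderiv {E F H : Type*} [NormedAddCommGroup E] [NormedSpace ℝ E]
    [NormedAddCommGroup F] [NormedSpace ℝ F] [NormedAddCommGroup H] [NormedSpace ℝ H]
    (P : F →L[ℝ] H) {f : E → F} (hf : Differentiable ℝ f) {y v : E} (hy : P (f y) = 0) {C : ℝ}
    (hC : ∀ s ∈ Icc (0:ℝ) 1, ‖P (fderiv ℝ f (y + s • v) v)‖ ≤ C) : ‖P (f (y + v))‖ ≤ C := by
  have hderiv : ∀ s ∈ Icc (0:ℝ) 1, HasDerivWithinAt (fun s : ℝ => P (f (y + s • v)))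
      (P (fderiv ℝ f (y + s • v) v)) (Icc 0 1) s := by
    intro s _
    have hline : HasDerivAt (fun s : ℝ => y + s • v) v s := by
      simpa using ((hasDerivAt_id s).smul_const v).const_add y
    exact (P.hasFDerivAt.comp_hasDerivAt s
      ((hf _).hasFDerivAt.comp_hasDerivAt s hline)).hasDerivWithinAt
  simpa [hy] using norm_image_sub_le_of_norm_deriv_le_segment_01' hderiv
    fun s hs => hC s (Ico_subset_Icc_self hs)

variable {f : R3 → R3} {σ μ u t η : ℝ}

lemma norm_PL_apply_le (hf : Differentiable ℝ f)
    (hD : ∀ x ∈ B1, ∀ y, ‖fderiv ℝ f x y - Tmap σ μ u t y‖ ≤ η * ‖y‖)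
    (hU : ∀ y ∈ Uset ∩ B1, f y ∈ Uset) {x : R3} (hx : x ∈ B1) :
    ‖PL (f x)‖ ≤ (exp (σ * t) + η) * ‖PL x‖ := by
  have hPU : PU x ∈ B1 := by simpa using PU_add_smul_PL_mem_B1 hx (left_mem_Icc.2 zero_le_one)
  have key := norm_apply_add_le_of_fderiv projL hf (y := PU x) (v := PL x)
    (C := (exp (σ * t) + η) * ‖PL x‖)
    (by simpa using PL_eq_zero_of_mem_Uset (hU _ ⟨PU_mem_Uset x, hPU⟩)) fun s hs => ?_
  · rwa [add_comm, PL_add_PU] at key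
  set z := PU x + s • PL x
  set T := Tmap σ μ u t (PL x)
  calc ‖projL (fderiv ℝ f z (PL x))‖ = ‖projL (fderiv ℝ f z (PL x) - T) + projL T‖ := by
        rw [← map_add, sub_add_cancel]
    _ ≤ η * ‖PL x‖ + exp (σ * t) * ‖PL x‖ := by
        refine (norm_add_le _ _).trans (add_le_add ?_ (by rw [projL_apply, norm_PL_Tmap, PL_PL]))
        exact (norm_PL_le _).trans (hD z (PU_add_smul_PL_mem_B1 hx hs) _)
    _ = (exp (σ * t) + η) * ‖PL x‖ := by ring

lemma norm_PU_apply_le (hf : Differentiable ℝ f)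
    (hD : ∀ x ∈ B1, ∀ y, ‖fderiv ℝ f x y - Tmap σ μ u t y‖ ≤ η * ‖y‖)
    (hL : ∀ y ∈ Lset ∩ B1, f y ∈ Lset) {x : R3} (hx : x ∈ B1) :
    ‖PU (f x)‖ ≤ (exp (u * t) + η) * ‖PU x‖ := by
  have hPL : PL x ∈ B1 := by simpa using PL_add_smul_PU_mem_B1 hx (left_mem_Icc.2 zero_le_one)
  have key := norm_apply_add_le_of_fderiv projU hf (y := PL x) (v := PU x)
    (C := (exp (u * t) + η) * ‖PU x‖)
    (by simpa using PU_eq_zero_of_mem_Lset (hL _ ⟨PL_mem_Lset x, hPL⟩)) fun s hs => ?_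
  · rwa [PL_add_PU] at key
  set z := PL x + s • PU x
  set T := Tmap σ μ u t (PU x)
  calc ‖projU (fderiv ℝ f z (PU x))‖ = ‖projU (fderiv ℝ f z (PU x) - T) + projU T‖ := by
        rw [← map_add, sub_add_cancel]
    _ ≤ η * ‖PU x‖ + exp (u * t) * ‖PU x‖ := by
        refine (norm_add_le _ _).trans (add_le_add ?_ (by rw [projU_apply, norm_PU_Tmap, PU_PU]))
        exact (norm_PU_le _).trans (hD z (PL_add_smul_PU_mem_B1 hx hs) _)
    _ = (exp (u * t) + η) * ‖PU x‖ := by ring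

end OneStep

section Flow

variable {G : ℝ → R3 → R3}

lemma IsC1Flow.differentiable_apply (hG : IsC1Flow G) (t : ℝ) : Differentiable ℝ (G t) :=
  (hG.1.comp (contDiff_const.prodMk contDiff_id)).differentiable one_ne_zero

lemma IsC1Flow.hasDerivAt_apply (hG : IsC1Flow G) (x : R3) (t : ℝ) :
    HasDerivAt (fun s => G s x) (deriv (fun s => G s (G t x)) 0) t := by
  have hd : HasDerivAt (fun s => G s (G t x)) (deriv (fun s => G s (G t x)) 0) (t - t) := by
    rw [sub_self]
    exact ((hG.1.comp (contDiff_id.prodMk contDiff_const)).differentiable one_ne_zero _).hasDerivAt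
  refine (hd.comp_sub_const t t).congr_of_eventuallyEq
    (Eventually.of_forall fun s => ?_)
  simp only [← hG.2.2, sub_add_cancel]

lemma InvariantIn.mem_of_mem_B1 {M : Set R3} {rB : ℝ}
    (hM : InvariantIn G M (Metric.closedBall 0 rB)) (hB1B : B1 ⊆ Metric.closedBall 0 rB)
    (hGB : ∀ t ∈ Icc (0:ℝ) 1, ∀ x ∈ B1, G t x ∈ Metric.closedBall (0 : R3) rB)
    {t : ℝ} (ht : t ∈ Icc (0:ℝ) 1) {y : R3} (hy : y ∈ M ∩ B1) : G t y ∈ M :=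
  hM y ⟨hy.1, hB1B hy.2⟩ (Icc 0 1) (left_mem_Icc.2 zero_le_one) ordConnected_Icc
    (fun s hs => hGB s hs y hy.2) t ht

end Flow

section Iteration

variable {G : ℝ → R3 → R3} {σ u η t₀ : ℝ} {x : R3}

lemma orbit_nat_bounds (hG : IsC1Flow G) {a b : ℝ} (ha₀ : 0 ≤ a) (ha₁ : a ≤ 1) (hb : 0 ≤ b)
    (hL : ∀ y ∈ B1, ‖PL (G 1 y)‖ ≤ a * ‖PL y‖) (hU : ∀ y ∈ B1, ‖PU (G 1 y)‖ ≤ b * ‖PU y‖)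
    (hx : ‖PL x‖ ≤ 1) (horbit : ∀ s ∈ Icc 0 t₀, ‖PU (G s x)‖ ≤ 1) (n : ℕ) (hn : (n : ℝ) ≤ t₀) :
    G n x ∈ B1 ∧ ‖PL (G n x)‖ ≤ a ^ n ∧ ‖PU (G n x)‖ ≤ b ^ n * ‖PU x‖ := by
  induction n with
  | zero =>
    simp only [Nat.cast_zero, hG.2.1, pow_zero, one_mul, le_refl, and_true]
    exact ⟨⟨hx, by simpa [hG.2.1] using horbit 0 ⟨le_rfl, by simpa using hn⟩⟩, hx⟩
  | succ n ih =>
    obtain ⟨hmem, hLn, hUn⟩ := ih (by push_cast at hn; linarith)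
    have hstep : G (n + 1 : ℕ) x = G 1 (G n x) := by rw [Nat.cast_succ, add_comm, hG.2.2]
    have hLn1 : ‖PL (G (n + 1 : ℕ) x)‖ ≤ a ^ (n + 1) := by
      rw [hstep, pow_succ']
      exact (hL _ hmem).trans (mul_le_mul_of_nonneg_left hLn ha₀)
    refine ⟨⟨hLn1.trans (pow_le_one₀ ha₀ ha₁), horbit _ ⟨by positivity, hn⟩⟩, hLn1, ?_⟩
    rw [hstep, pow_succ', mul_assoc]
    exact (hU _ hmem).trans (mul_le_mul_of_nonneg_left hUn hb)

lemma exists_nat_orbit_bounds (hG : IsC1Flow G)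
    (hL : ∀ t ∈ Icc (0:ℝ) 1, ∀ y ∈ B1, ‖PL (G t y)‖ ≤ (exp (σ * t) + η) * ‖PL y‖)
    (hU : ∀ t ∈ Icc (0:ℝ) 1, ∀ y ∈ B1, ‖PU (G t y)‖ ≤ (exp (u * t) + η) * ‖PU y‖)
    (hσ : σ ≤ 0) (hu : 0 ≤ u) (hη : 0 ≤ η) (hση : exp σ + η ≤ 1)
    (hx : ‖PL x‖ ≤ 1) (ht₀ : 0 ≤ t₀) (horbit : ∀ s ∈ Icc 0 t₀, ‖PU (G s x)‖ ≤ 1) :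
    ∃ n : ℕ, ‖PL (G t₀ x)‖ ≤ (1 + η) * (exp σ + η) ^ n ∧
      ‖PU (G t₀ x)‖ ≤ (exp u + η) ^ (n + 1) * ‖PU x‖ := by
  set n := ⌊t₀⌋₊
  have ht : t₀ - n ∈ Icc (0:ℝ) 1 :=
    ⟨sub_nonneg.2 (Nat.floor_le ht₀), by linarith [Nat.lt_floor_add_one t₀]⟩
  have h1 : (1:ℝ) ∈ Icc (0:ℝ) 1 := right_mem_Icc.2 zero_le_one
  obtain ⟨hmem, hLn, hUn⟩ := orbit_nat_bounds hG (a := exp σ + η) (b := exp u + η)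
    (by positivity) hση (by positivity)
    (by simpa using hL 1 h1) (by simpa using hU 1 h1) hx horbit n (Nat.floor_le ht₀)
  have hsplit : G t₀ x = G (t₀ - n) (G n x) := by rw [← hG.2.2, sub_add_cancel]
  refine ⟨n, ?_, ?_⟩ <;> rw [hsplit]
  · calc ‖PL (G (t₀ - n) (G n x))‖ ≤ (exp (σ * (t₀ - n)) + η) * ‖PL (G n x)‖ := hL _ ht _ hmem
      _ ≤ (1 + η) * (exp σ + η) ^ n := by
        gcongr
        exact exp_le_one_iff.2 (mul_nonpos_of_nonpos_of_nonneg hσ ht.1)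
  · calc ‖PU (G (t₀ - n) (G n x))‖ ≤ (exp (u * (t₀ - n)) + η) * ‖PU (G n x)‖ := hU _ ht _ hmem
      _ ≤ (exp u + η) * ((exp u + η) ^ n * ‖PU x‖) := by
        gcongr
        exact mul_le_of_le_one_right hu ht.2
      _ = (exp u + η) ^ (n + 1) * ‖PU x‖ := by ring

lemma exp_add_lt_exp_half (hησ2 : 1 + η * exp (-σ) < exp (-σ / 2)) : exp σ + η < exp (σ / 2) := by
  have h := mul_lt_mul_of_pos_left hησ2 (exp_pos σ)
  rwa [mul_add, mul_one, mul_left_comm, ← exp_add, add_neg_cancel, exp_zero, mul_one, ← exp_add,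
    show σ + -σ / 2 = σ / 2 by ring] at h

lemma one_add_mul_pow_lt (hσ : σ < 0) (hu : 0 < u) (hη : 0 < η) (hησ : η < exp σ)
    (hησ2 : 1 + η * exp (-σ) < exp (-σ / 2)) {r δ ξ : ℝ} (hr : 0 < r) (hδ : 0 < δ)
    (hrδ : 1 + 2 / σ * log r < 1 / (u + log 2) * log (1 / δ) - 1) (hξ : ξ < δ) {n : ℕ}
    (hn : 1 ≤ (exp u + η) ^ (n + 1) * ξ) : (1 + η) * (exp σ + η) ^ n < r := by
  have hξ₀ : 0 < ξ := pos_of_mul_pos_right (by linarith) (by positivity)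
  have hexpu : exp u + η ≤ 2 * exp u := by
    linarith [exp_lt_one_iff.2 hσ, one_lt_exp_iff.2 hu]
  have hgrowth : 1 < (2 * exp u) ^ (n + 1) * δ := calc
    1 ≤ (exp u + η) ^ (n + 1) * ξ := hn
    _ ≤ (2 * exp u) ^ (n + 1) * ξ := by gcongr
    _ < (2 * exp u) ^ (n + 1) * δ := by gcongr
  have hlog : log (1 / δ) < (n + 1) * (u + log 2) := by
    have := log_pos hgrowth
    rw [log_mul (by positivity) hδ.ne', log_pow, log_mul two_ne_zero (exp_pos u).ne', log_exp]
      at this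
    rw [one_div, log_inv]
    push_cast at this
    linarith
  have hlog2u : 0 < u + log 2 := by linarith [log_pos one_lt_two]
  have hn' : 2 / σ * log r < n - 1 := by
    have : 1 / (u + log 2) * log (1 / δ) < n + 1 := by
      rw [one_div_mul_eq_div, div_lt_iff₀ hlog2u]; exact hlog
    linarith
  have hexp : exp (σ / 2 * (n - 1)) < r := by
    rw [← exp_log hr, exp_lt_exp]
    have := mul_lt_mul_of_neg_left hn' (by linarith : σ / 2 < 0)
    rwa [show σ / 2 * (2 / σ * log r) = log r by field_simp [hσ.ne]] at this
  calc (1 + η) * (exp σ + η) ^ n ≤ (1 + η) * exp (σ / 2) ^ n := by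
        gcongr; exact (exp_add_lt_exp_half hησ2).le
    _ < exp (-σ / 2) * exp (σ / 2) ^ n := by
        gcongr
        have h1 : 1 < exp (-σ) := one_lt_exp_iff.2 (neg_pos.2 hσ)
        nlinarith
    _ = exp (σ / 2 * (n - 1)) := by rw [← exp_nat_mul, ← exp_add]; ring_nf
    _ < r := hexp

lemma norm_PL_lt_of_hit {r δ : ℝ} (hG : IsC1Flow G)
    (hL : ∀ t ∈ Icc (0:ℝ) 1, ∀ y ∈ B1, ‖PL (G t y)‖ ≤ (exp (σ * t) + η) * ‖PL y‖)
    (hU : ∀ t ∈ Icc (0:ℝ) 1, ∀ y ∈ B1, ‖PU (G t y)‖ ≤ (exp (u * t) + η) * ‖PU y‖)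
    (hσ : σ < 0) (hu : 0 < u) (hη : 0 < η) (hησ : η < exp σ)
    (hησ2 : 1 + η * exp (-σ) < exp (-σ / 2)) (hr : 0 < r) (hδ : 0 < δ)
    (hrδ : 1 + 2 / σ * log r < 1 / (u + log 2) * log (1 / δ) - 1)
    (hx : ‖PL x‖ = 1) (hxδ : x 2 < δ) (ht₀ : 0 < t₀)
    (horbit : ∀ s ∈ Ico 0 t₀, 0 < G s x 2 ∧ G s x 2 < 1) (hend : G t₀ x 2 = 1) :
    ‖PL (G t₀ x)‖ < r := by
  have horbit' : ∀ s ∈ Icc 0 t₀, ‖PU (G s x)‖ ≤ 1 := by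
    intro s hs
    rw [norm_PU]
    rcases hs.2.lt_or_eq with h | rfl
    · obtain ⟨h₀, h₁⟩ := horbit s ⟨hs.1, h⟩
      exact abs_le.2 ⟨by linarith, h₁.le⟩
    · simp [hend]
  have hx₀ : 0 < x 2 := by simpa [hG.2.1] using (horbit 0 ⟨le_rfl, ht₀⟩).1
  have hση : exp σ + η ≤ 1 :=
    (exp_add_lt_exp_half hησ2).le.trans (exp_le_one_iff.2 (by linarith))
  obtain ⟨n, hLn, hUn⟩ :=
    exists_nat_orbit_bounds hG hL hU hσ.le hu.le hη.le hση hx.le ht₀.le horbit'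
  rw [norm_PU, norm_PU, hend, abs_one, abs_of_pos hx₀] at hUn
  exact hLn.trans_lt (one_add_mul_pow_lt hσ hu hη hησ hησ2 hr hδ hrδ hxδ hUn)

end Iteration

theorem statement12_general
    (u σ μ η rB : ℝ) (hu : 0 < u) (hσ : σ < 0) (hη : 0 < η)
    (hB1B : B1 ⊆ Metric.closedBall (0 : R3) rB)
    (G : ℝ → R3 → R3) (hG : IsC1Flow G)
    (hD2 : ∀ t ∈ Icc (0:ℝ) 1, ∀ x ∈ B1, ∀ y : R3,
      ‖fderiv ℝ (G t) x y - Tmap σ μ u t y‖ ≤ η * ‖y‖)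
    (hGB : ∀ t ∈ Icc (0:ℝ) 1, ∀ x ∈ B1, G t x ∈ Metric.closedBall (0 : R3) rB)
    (hLinv : InvariantIn G Lset (Metric.closedBall 0 rB))
    (hUinv : InvariantIn G Uset (Metric.closedBall 0 rB))
    (hησ : η < exp σ) (hησ2 : 1 + η * exp (-σ) < exp (-σ / 2))
    (r : ℝ) (hr : 0 < r) (δstar : ℝ) (hδstar : δstar ∈ Ioo (0 : ℝ) 1)
    (hrδ : 1 + 2 / σ * Real.log r < 1 / (u + Real.log 2) * Real.log (1 / δstar) - 1)
    (htrans : ∀ y : R3, y - e3 ∈ Lset → ‖y - e3‖ < r → deriv (fun s => G s y) 0 ∉ Lset)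
    (τ : R3 → ℝ)
    (hτ : ∀ x : R3, ‖PL x‖ = 1 → 0 < x 2 → x 2 < δstar →
      0 < τ x ∧ (∀ s ∈ Ico (0 : ℝ) (τ x), 0 < G s x 2 ∧ G s x 2 < 1) ∧ G (τ x) x 2 = 1) :
    ContDiffOn ℝ 1 (fun p : ℝ × ℝ => τ (xpt p.1 p.2)) (univ ×ˢ Ioo (0 : ℝ) δstar) := by
  have hL : ∀ t ∈ Icc (0:ℝ) 1, ∀ y ∈ B1, ‖PL (G t y)‖ ≤ (exp (σ * t) + η) * ‖PL y‖ :=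
    fun t ht y hy => norm_PL_apply_le (hG.differentiable_apply t) (hD2 t ht)
      (fun _ hz => hUinv.mem_of_mem_B1 hB1B hGB ht hz) hy
  have hU : ∀ t ∈ Icc (0:ℝ) 1, ∀ y ∈ B1, ‖PU (G t y)‖ ≤ (exp (u * t) + η) * ‖PU y‖ :=
    fun t ht y hy => norm_PU_apply_le (hG.differentiable_apply t) (hD2 t ht)
      (fun _ hz => hLinv.mem_of_mem_B1 hB1B hGB ht hz) hy
  set F : (ℝ × ℝ) × ℝ → ℝ := fun w => G w.2 (xpt w.1.1 w.1.2) 2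
  have hF : ContDiff ℝ 1 F := (EuclideanSpace.proj (𝕜 := ℝ) (2 : Fin 3)).contDiff.comp
    (hG.1.comp (contDiff_snd.prodMk (contDiff_xpt.comp contDiff_fst)))
  have hhit : ∀ p ∈ univ ×ˢ Ioo 0 δstar,
      IsFirstHitTime (fun s => F (p, s)) 1 (τ (xpt p.1 p.2)) := fun p hp =>
    let ⟨h₀, hmid, h₁⟩ := hτ _ (norm_PL_xpt p.1 p.2) hp.2.1 hp.2.2
    ⟨h₀, fun s hs => (hmid s hs).2, h₁⟩
  intro p hp
  obtain ⟨ht₀, hmid, hend⟩ := hτ _ (norm_PL_xpt p.1 p.2) hp.2.1 hp.2.2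
  have hnear : ‖PL (G (τ (xpt p.1 p.2)) (xpt p.1 p.2))‖ < r :=
    norm_PL_lt_of_hit hG hL hU hσ hu hη hησ hησ2 hr hδstar.1 hrδ (norm_PL_xpt p.1 p.2) hp.2.2
      ht₀ hmid hend
  refine (contDiffAt_of_isFirstHitTime hF
    (eventually_of_mem ((isOpen_univ.prod isOpen_Ioo).mem_nhds hp) hhit)
    ((EuclideanSpace.proj (𝕜 := ℝ) (2 : Fin 3)).hasFDerivAt.comp_hasDerivAt _
      (hG.hasDerivAt_apply (xpt p.1 p.2) _))
    (htrans _ (mem_Lset_sub_e3 hend) (by rwa [norm_sub_e3 hend]))).contDiffWithinAt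

theorem statement12
    (u σ μ η rB : ℝ) (hu : 0 < u) (hσ : σ < 0) (hμ : 0 < μ) (hη : 0 < η)
    (hB1B : B1 ⊆ Metric.closedBall (0 : R3) rB)
    (G : ℝ → R3 → R3) (hG : IsC1Flow G) (hG0 : ∀ t : ℝ, G t 0 = 0)
    (hD2 : ∀ t ∈ Icc (0:ℝ) 1, ∀ x ∈ B1, ∀ y : R3,
      ‖fderiv ℝ (G t) x y - Tmap σ μ u t y‖ ≤ η * ‖y‖)
    (hGB : ∀ t ∈ Icc (0:ℝ) 1, ∀ x ∈ B1, G t x ∈ Metric.closedBall (0 : R3) rB)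
    (hLinv : InvariantIn G Lset (Metric.closedBall 0 rB))
    (hUinv : InvariantIn G Uset (Metric.closedBall 0 rB))
    (hησ : η < exp σ) (hησ2 : 1 + η * exp (-σ) < exp (-σ / 2)) (hσu : 0 < σ + u)
    (r : ℝ) (hr : 0 < r) (δstar : ℝ) (hδstar : δstar ∈ Ioo (0 : ℝ) 1)
    (hrδ : 1 + 2 / σ * Real.log r < 1 / (u + Real.log 2) * Real.log (1 / δstar) - 1)
    (htrans : ∀ y : R3, y - e3 ∈ Lset → ‖y - e3‖ < r → deriv (fun s => G s y) 0 ∉ Lset)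
    (τ : R3 → ℝ)
    (hτ : ∀ x : R3, ‖PL x‖ = 1 → 0 < x 2 → x 2 < δstar →
      0 < τ x ∧ (∀ s ∈ Ico (0 : ℝ) (τ x), 0 < G s x 2 ∧ G s x 2 < 1) ∧ G (τ x) x 2 = 1) :
    ContDiffOn ℝ 1 (fun p : ℝ × ℝ => τ (xpt p.1 p.2)) (univ ×ˢ Ioo (0 : ℝ) δstar) :=
  statement12_general u σ μ η rB hu hσ hη hB1B G hG hD2 hGB hLinv hUinv hησ hησ2 r hr δstar hδstar
    hrδ htrans τ hτ
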